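/- arXiv:1603.01181 — 7 statements merged into one kernel-verified Lean document; each statement's English description precedes it below -/
import Mathlib

section
/- Let G = (V,E) be a finite simple graph, M ⊆ V, and let v be a legal move from M (i.e., N[M ∪ {v}] ⊋ N[M]). Let p be a value function for M and p' a value function for M ∪ {v} such that p'(u) ≤ p(u) for every vertex u, and such that p'(u) = 2 for every vertex u that is blue with respect to M ∪ {v} but was white with respect to M. Then Σ_{u∈V} p(u) − Σ_{u∈V} p'(u) ≥ 3; that is, if all newly blue vertices are assigned value 2, the move gains at least 3 points. -/
/-- The closed neighborhood of a set `S` of vertices: `S` together with all vertices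
adjacent to some member of `S`. -/
def closedNbhdSet {V : Type*} (G : SimpleGraph V) (S : Set V) : Set V :=
  S ∪ {u | ∃ s ∈ S, G.Adj u s}

/-- `p` is a value function for the position `M`: every white vertex (not dominated)
is worth `3` points, every red vertex (its whole closed neighborhood is dominated)
is worth `0` points, and every blue vertex (dominated but with an undominated
neighbor) is worth `2` or `3` points. -/
def IsValueFn {V : Type*} (G : SimpleGraph V) (M : Set V) (p : V → ℕ) : Prop :=
  (∀ u, u ∉ closedNbhdSet G M → p u = 3) ∧
  (∀ u, closedNbhdSet G {u} ⊆ closedNbhdSet G M → p u = 0) ∧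
  (∀ u, u ∈ closedNbhdSet G M → ¬ closedNbhdSet G {u} ⊆ closedNbhdSet G M →
    (p u = 2 ∨ p u = 3))

lemma closedNbhdSet_mono {V : Type*} (G : SimpleGraph V) {S T : Set V} (h : S ⊆ T) :
    closedNbhdSet G S ⊆ closedNbhdSet G T := by
  rintro x (hx | ⟨s, hs, hadj⟩)
  · exact Or.inl (h hx)
  · exact Or.inr ⟨s, h hs, hadj⟩

lemma sum_aux₁ {V : Type*} [Fintype V] (p p' : V → ℕ) (hle : ∀ u, p' u ≤ p u)
    (a : V) (h : p' a + 3 ≤ p a) : ∑ u, p' u + 3 ≤ ∑ u, p u := by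
  classical
  rw [← Finset.add_sum_erase _ p (Finset.mem_univ a),
      ← Finset.add_sum_erase _ p' (Finset.mem_univ a)]
  have := Finset.sum_le_sum (f := p') (g := p) (s := Finset.univ.erase a)
    (fun i _ => hle i)
  omega

lemma sum_aux₂ {V : Type*} [Fintype V] (p p' : V → ℕ) (hle : ∀ u, p' u ≤ p u)
    (a b : V) (hab : a ≠ b) (h : p' a + p' b + 3 ≤ p a + p b) :
    ∑ u, p' u + 3 ≤ ∑ u, p u := by
  classical
  have hb : b ∈ Finset.univ.erase a := Finset.mem_erase.2 ⟨hab.symm, Finset.mem_univ b⟩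
  rw [← Finset.add_sum_erase _ p (Finset.mem_univ a),
      ← Finset.add_sum_erase _ p' (Finset.mem_univ a),
      ← Finset.add_sum_erase _ p hb, ← Finset.add_sum_erase _ p' hb]
  have := Finset.sum_le_sum (f := p') (g := p) (s := (Finset.univ.erase a).erase b)
    (fun i _ => hle i)
  omega

/-- If all newly blue vertices (blue with respect to `M ∪ {v}` but white with respect
to `M`) are assigned value 2 after the move, then any legal move gains at least 3
points. -/
theorem legal_move_gains_three {V : Type*} [Fintype V] (G : SimpleGraph V)
    (M : Set V) (v : V)
    (hv : closedNbhdSet G M ⊂ closedNbhdSet G (M ∪ {v}))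
    (p p' : V → ℕ) (hp : IsValueFn G M p) (hp' : IsValueFn G (M ∪ {v}) p')
    (hle : ∀ u, p' u ≤ p u)
    (hnew : ∀ u, u ∉ closedNbhdSet G M →
      u ∈ closedNbhdSet G (M ∪ {v}) →
      ¬ closedNbhdSet G {u} ⊆ closedNbhdSet G (M ∪ {v}) → p' u = 2) :
    ∑ u, p' u + 3 ≤ ∑ u, p u := by
  obtain ⟨hpw, hpr, hpb⟩ := hp
  obtain ⟨hpw', hpr', hpb'⟩ := hp'
  have hvM' : v ∈ closedNbhdSet G (M ∪ {v}) := Or.inl (Or.inr rfl)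
  have hNv : closedNbhdSet G {v} ⊆ closedNbhdSet G (M ∪ {v}) :=
    closedNbhdSet_mono G (by simp)
  have hpv' : p' v = 0 := hpr' v hNv
  by_cases hred : closedNbhdSet G {v} ⊆ closedNbhdSet G M
  · exfalso
    apply hv.2
    rintro x (hx | ⟨s, hs, hadj⟩)
    · rcases hx with hx | hx
      · exact Or.inl hx
      · exact hred (Or.inl hx)
    · rcases hs with hs | hs
      · exact Or.inr ⟨s, hs, hadj⟩
      · exact hred (Or.inr ⟨s, hs, hadj⟩)
  by_cases hwhite : v ∈ closedNbhdSet G M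
  · -- v was blue
    have hpv : p v = 2 ∨ p v = 3 := hpb v hwhite hred
    obtain ⟨u, hu1, hu2⟩ := Set.not_subset.1 hred
    have huM' : u ∈ closedNbhdSet G (M ∪ {v}) := hNv hu1
    have huv : u ≠ v := fun h => hu2 (h ▸ hwhite)
    have hpu : p u = 3 := hpw u hu2
    by_cases hsub : closedNbhdSet G {u} ⊆ closedNbhdSet G (M ∪ {v})
    · have : p' u = 0 := hpr' u hsub
      refine sum_aux₂ p p' hle v u huv.symm ?_
      omega
    · have : p' u = 2 := hnew u hu2 huM' hsub
      refine sum_aux₂ p p' hle v u huv.symm ?_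
      omega
  · have hpv : p v = 3 := hpw v hwhite
    exact sum_aux₁ p p' hle v (by omega)
end

section
/- Let G = (V,E) be a finite simple graph, M ⊆ V, and p a value function for M. Then for every legal move v from M there exists a value function p' for M ∪ {v} such that p'(u) ≤ p(u) for every vertex u and Σ_{u∈V} p(u) − Σ_{u∈V} p'(u) ≥ 3; that is, it is always possible to define the value function after a legal move so that at least 3 points are gained. -/
lemma self_mem_closedNbhdSet {V : Type*} (G : SimpleGraph V) (u : V) :
    u ∈ closedNbhdSet G {u} := Or.inl rfl

/-- After any legal move it is always possible to choose the new value function,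
pointwise not larger than the old one, so that at least 3 points are gained. -/
theorem exists_value_fn_gaining_three {V : Type*} [Fintype V] (G : SimpleGraph V)
    (M : Set V) (v : V)
    (hv : closedNbhdSet G M ⊂ closedNbhdSet G (M ∪ {v}))
    (p : V → ℕ) (hp : IsValueFn G M p) :
    ∃ p' : V → ℕ, IsValueFn G (M ∪ {v}) p' ∧ (∀ u, p' u ≤ p u) ∧
      ∑ u, p' u + 3 ≤ ∑ u, p u := by
  classical
  obtain ⟨w, hwN', hwN⟩ := Set.exists_of_ssubset hv
  have hMN' : closedNbhdSet G M ⊆ closedNbhdSet G (M ∪ {v}) :=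
    closedNbhdSet_mono G Set.subset_union_left
  have hvN' : closedNbhdSet G {v} ⊆ closedNbhdSet G (M ∪ {v}) :=
    closedNbhdSet_mono G Set.subset_union_right
  -- w is in the closed neighborhood of v
  have hwv : w ∈ closedNbhdSet G {v} := by
    rcases hwN' with h1 | ⟨s, hs, ha⟩
    · rcases h1 with h1 | h1
      · exact absurd (Or.inl h1) hwN
      · exact Or.inl h1
    · rcases hs with hs | hs
      · exact absurd (Or.inr ⟨s, hs, ha⟩) hwN
      · exact Or.inr ⟨s, hs, ha⟩
  have hvnotred : ¬ closedNbhdSet G {v} ⊆ closedNbhdSet G M := fun h => hwN (h hwv)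
  have hpw : p w = 3 := hp.1 w hwN
  have hpv2 : 2 ≤ p v := by
    by_cases hvin : v ∈ closedNbhdSet G M
    · rcases hp.2.2 v hvin hvnotred with h | h <;> omega
    · have := hp.1 v hvin; omega
  set p' : V → ℕ := fun u =>
    if closedNbhdSet G {u} ⊆ closedNbhdSet G (M ∪ {v}) then 0
    else if u ∈ closedNbhdSet G (M ∪ {v}) then 2 else 3 with hp'def
  have hvf : IsValueFn G (M ∪ {v}) p' := by
    refine ⟨fun u hu => ?_, fun u hu => ?_, fun u hu hnr => ?_⟩
    · have h1 : ¬ closedNbhdSet G {u} ⊆ closedNbhdSet G (M ∪ {v}) :=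
        fun h => hu (h (self_mem_closedNbhdSet G u))
      simp only [hp'def]
      rw [if_neg h1, if_neg hu]
    · simp only [hp'def]
      rw [if_pos hu]
    · left
      simp only [hp'def]
      rw [if_neg hnr, if_pos hu]
  have hle : ∀ u, p' u ≤ p u := by
    intro u
    by_cases h1 : closedNbhdSet G {u} ⊆ closedNbhdSet G (M ∪ {v})
    · simp only [hp'def]
      rw [if_pos h1]
      exact Nat.zero_le _
    · by_cases h2 : u ∈ closedNbhdSet G (M ∪ {v})
      · have : p' u = 2 := by simp only [hp'def]; rw [if_neg h1, if_pos h2]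
        rw [this]
        have hnr : ¬ closedNbhdSet G {u} ⊆ closedNbhdSet G M :=
          fun h => h1 (h.trans hMN')
        by_cases h3 : u ∈ closedNbhdSet G M
        · rcases hp.2.2 u h3 hnr with h | h <;> omega
        · have := hp.1 u h3; omega
      · have : p' u = 3 := by simp only [hp'def]; rw [if_neg h1, if_neg h2]
        rw [this]
        have h3 : u ∉ closedNbhdSet G M := fun h => h2 (hMN' h)
        exact (hp.1 u h3).ge
  have hp'v : p' v = 0 := by simp only [hp'def]; rw [if_pos hvN']
  refine ⟨p', hvf, hle, ?_⟩
  by_cases hwveq : w = v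
  · subst hwveq
    rw [← Finset.sum_erase_add _ p' (Finset.mem_univ w),
        ← Finset.sum_erase_add _ p (Finset.mem_univ w)]
    have hsum : ∑ u ∈ Finset.univ.erase w, p' u ≤ ∑ u ∈ Finset.univ.erase w, p u :=
      Finset.sum_le_sum fun i _ => hle i
    omega
  · have hp'w : p' w ≤ 2 := by
      have hw2 : w ∈ closedNbhdSet G (M ∪ {v}) := hwN'
      by_cases h : closedNbhdSet G {w} ⊆ closedNbhdSet G (M ∪ {v})
      · simp only [hp'def]; rw [if_pos h]; omega
      · simp only [hp'def]; rw [if_neg h, if_pos hw2]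
    have hwmem : w ∈ Finset.univ.erase v := Finset.mem_erase.2 ⟨hwveq, Finset.mem_univ w⟩
    rw [← Finset.sum_erase_add _ p' (Finset.mem_univ v),
        ← Finset.sum_erase_add _ p (Finset.mem_univ v),
        ← Finset.sum_erase_add _ p' hwmem,
        ← Finset.sum_erase_add _ p hwmem]
    have hsum : ∑ u ∈ (Finset.univ.erase v).erase w, p' u ≤
        ∑ u ∈ (Finset.univ.erase v).erase w, p u :=
      Finset.sum_le_sum fun i _ => hle i
    omega
end

section
/- Let G = (V,E) be a finite isolate-free simple graph (every vertex has at least one neighbor), let M ⊆ V be a set which is not dominating (N[M] ≠ V), and let p be a value function for M. Then Σ_{v∈V} p(v) ≥ 5. In particular, the last move of the domination game on a component gains at least 5 points (since after the last move all values are 0). -/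
/-! A white vertex `w` is worth 3, and any neighbor `u` of it (one exists since `G` has no
isolated vertices) has the undominated vertex `w` in its closed neighborhood, so `u` is not
red and is worth at least 2. -/

theorem exists_not_mem_closedNbhdSet {V : Type*} {G : SimpleGraph V} {M : Set V}
    (hM : closedNbhdSet G M ≠ Set.univ) : ∃ w, w ∉ closedNbhdSet G M := by
  simpa [Set.eq_univ_iff_forall] using hM

theorem mem_closedNbhdSet_singleton_of_adj {V : Type*} {G : SimpleGraph V} {w u : V}
    (h : G.Adj w u) : w ∈ closedNbhdSet G {u} :=
  Or.inr ⟨u, rfl, h⟩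

namespace IsValueFn

variable {V : Type*} {G : SimpleGraph V} {M : Set V} {p : V → ℕ}

theorem two_le_of_not_subset (hp : IsValueFn G M p) {u : V}
    (hu : ¬ closedNbhdSet G {u} ⊆ closedNbhdSet G M) : 2 ≤ p u := by
  by_cases huM : u ∈ closedNbhdSet G M
  · rcases hp.2.2 u huM hu with h | h <;> omega
  · rw [hp.1 u huM]; norm_num

theorem two_le_of_adj_of_not_mem (hp : IsValueFn G M p) {w u : V}
    (hw : w ∉ closedNbhdSet G M) (hwu : G.Adj w u) : 2 ≤ p u :=
  hp.two_le_of_not_subset fun h => hw (h (mem_closedNbhdSet_singleton_of_adj hwu))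

end IsValueFn

/-- In an isolate-free graph, if `M` is not a dominating set then the total value of
the vertices is at least 5; in particular the last move of the game on a component
gains at least 5 points. -/
theorem last_move_gains_five {V : Type*} [Fintype V] (G : SimpleGraph V)
    (hiso : ∀ v : V, ∃ w : V, G.Adj v w)
    (M : Set V) (hM : closedNbhdSet G M ≠ Set.univ)
    (p : V → ℕ) (hp : IsValueFn G M p) :
    5 ≤ ∑ u, p u := by
  classical
  obtain ⟨w, hw⟩ := exists_not_mem_closedNbhdSet hM
  obtain ⟨u, hwu⟩ := hiso w
  have hpw : p w = 3 := hp.1 w hw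
  have hpu : 2 ≤ p u := hp.two_le_of_adj_of_not_mem hw hwu
  calc 5 ≤ p w + p u := by omega
    _ = ∑ v ∈ {w, u}, p v := (Finset.sum_pair hwu.ne).symm
    _ ≤ ∑ v, p v := Finset.sum_le_sum_of_subset (Finset.subset_univ _)
end

section
/- Every finite tree (a connected acyclic simple graph) containing a vertex of degree 3 or more contains at least one split vertex, i.e., a vertex of degree at least 3 that has at least two tails. -/
/-
Root the tree at `v` and pick a vertex `s` of degree at least 3 as far from `v` as possible.
Only one neighbour of `s` lies closer to `v` (the one on the unique path back to `v`), so `s`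
has at least two children. By maximality every vertex below `s` has degree at most 2, so
descending from either child, always to the next child, never branches; as the distance to `v`
grows at each step, the descent ends at a leaf, and the two descents are two tails of `s`.
-/

/-- `IsTailThrough G v₀ v₁` says that `v₀` has a tail whose first vertex is `v₁`:
there is a path `(v₀, v₁, …, v_k)` of distinct vertices, `k ≥ 1`, with consecutive
vertices adjacent, `deg v₀ ≥ 3`, `deg v_k = 1`, and `deg v_i = 2` for `0 < i < k`. -/
def IsTailThrough {V : Type*} [Fintype V] (G : SimpleGraph V) [DecidableRel G.Adj]
    (v₀ v₁ : V) : Prop :=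
  ∃ (k : ℕ) (w : ℕ → V), 1 ≤ k ∧ w 0 = v₀ ∧ w 1 = v₁ ∧
    (∀ i, i < k → G.Adj (w i) (w (i + 1))) ∧
    (∀ i j, i ≤ k → j ≤ k → w i = w j → i = j) ∧
    3 ≤ G.degree v₀ ∧ G.degree (w k) = 1 ∧
    (∀ i, 0 < i → i < k → G.degree (w i) = 2)

/-- A split vertex: a vertex of degree at least 3 having at least two tails
(two tails with distinct first vertices). -/
def IsSplitVertex {V : Type*} [Fintype V] (G : SimpleGraph V) [DecidableRel G.Adj]
    (s : V) : Prop :=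
  3 ≤ G.degree s ∧
    ∃ u₁ u₂ : V, u₁ ≠ u₂ ∧ IsTailThrough G s u₁ ∧ IsTailThrough G s u₂

namespace SimpleGraph

variable {V : Type*} {G : SimpleGraph V}

lemma dist_lt_card [Fintype V] (u v : V) : G.dist u v < Fintype.card V := by
  by_cases h : G.Reachable u v
  · obtain ⟨p, hp, hlen⟩ := h.exists_path_of_dist
    exact hlen ▸ hp.length_lt
  · rw [dist_eq_zero_of_not_reachable h]
    exact Fintype.card_pos_iff.mpr ⟨u⟩

lemma Walk.notMem_support_of_length_lt_dist {u x y : V} (q : G.Walk u y)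
    (h : q.length < G.dist u x) : x ∉ q.support := by
  classical
  intro hx
  have := q.length_takeUntil_le_length hx
  exact (dist_le (q.takeUntil x hx)).not_gt (by omega)

lemma IsTree.eq_of_dist_add_one_eq (hG : G.IsTree) (u : V) {x y₁ y₂ : V}
    (h₁ : G.Adj y₁ x) (h₂ : G.Adj y₂ x) (hd₁ : G.dist u y₁ + 1 = G.dist u x)
    (hd₂ : G.dist u y₂ + 1 = G.dist u x) : y₁ = y₂ := by
  obtain ⟨p, hp, -⟩ := hG.connected.exists_path_of_dist u x
  have eq_penultimate : ∀ y, G.Adj y x → G.dist u y + 1 = G.dist u x → y = p.penultimate := by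
    intro y hy hd
    obtain ⟨q, hq, hlen⟩ := hG.connected.exists_path_of_dist u y
    have hx : x ∉ q.support := q.notMem_support_of_length_lt_dist (by omega)
    exact hG.isAcyclic.eq_penultimate_of_adj_end hp hy.symm
      (hG.isAcyclic.mem_support_of_ne_mem_support_of_adj_of_isPath hp hq hy.symm hx)
  exact (eq_penultimate y₁ h₁ hd₁).trans (eq_penultimate y₂ h₂ hd₂).symm

lemma IsTree.dist_eq_add_one_of_adj_of_ne (hG : G.IsTree) (u : V) {x y z : V}
    (hyx : G.Adj y x) (hd : G.dist u x = G.dist u y + 1) (hxz : G.Adj x z) (hzy : z ≠ y) :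
    G.dist u z = G.dist u x + 1 :=
  (hG.dist_eq_dist_add_one_of_adj u hxz).resolve_left fun hdz =>
    hzy (hG.eq_of_dist_add_one_eq u hxz.symm hyx hdz.symm hd.symm)

variable [Fintype V] [DecidableRel G.Adj]

lemma IsTree.one_lt_card_filter_dist_eq_add_one (hG : G.IsTree) (u : V) {s : V}
    (hs : 3 ≤ G.degree s) :
    1 < ((G.neighborFinset s).filter fun y => G.dist u y = G.dist u s + 1).card := by
  have hparents :
      ((G.neighborFinset s).filter fun y => ¬G.dist u y = G.dist u s + 1).card ≤ 1 := by
    refine Finset.card_le_one.mpr fun a ha b hb => ?_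
    simp only [Finset.mem_filter, mem_neighborFinset] at ha hb
    have hda := (hG.dist_eq_dist_add_one_of_adj u ha.1).resolve_right ha.2
    have hdb := (hG.dist_eq_dist_add_one_of_adj u hb.1).resolve_right hb.2
    exact hG.eq_of_dist_add_one_eq u ha.1.symm hb.1.symm hda.symm hdb.symm
  have := Finset.card_filter_add_card_filter_not (s := G.neighborFinset s)
    (p := fun y => G.dist u y = G.dist u s + 1)
  rw [card_neighborFinset_eq_degree] at this
  omega

theorem IsTree.exists_tail_away_from (hG : G.IsTree) (u : V) {y x : V} (hyx : G.Adj y x)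
    (hd : G.dist u x = G.dist u y + 1)
    (hlow : ∀ z, G.dist u y < G.dist u z → G.degree z ≤ 2) :
    ∃ (k : ℕ) (w : ℕ → V), 1 ≤ k ∧ w 0 = y ∧ w 1 = x ∧
      (∀ i, i < k → G.Adj (w i) (w (i + 1))) ∧
      (∀ i, i ≤ k → G.dist u (w i) = G.dist u y + i) ∧
      G.degree (w k) = 1 ∧ (∀ i, 0 < i → i < k → G.degree (w i) = 2) := by
  have hx_le : G.degree x ≤ 2 := hlow x (by omega)
  have hx_pos : 0 < G.degree x := G.degree_pos_iff_exists_adj x |>.mpr ⟨y, hyx.symm⟩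
  rcases (by omega : G.degree x = 1 ∨ G.degree x = 2) with hleaf | hx_two
  · refine ⟨1, fun i => if i = 0 then y else x, le_rfl, rfl, rfl, ?_, ?_, by simpa, by omega⟩
    · intro i hi
      obtain rfl : i = 0 := by omega
      simpa using hyx
    · intro i hi
      rcases (by omega : i = 0 ∨ i = 1) with rfl | rfl <;> simp [hd]
  · obtain ⟨z, hz, hzy⟩ := Finset.exists_mem_ne
      (by rw [card_neighborFinset_eq_degree]; omega : 1 < (G.neighborFinset x).card) y
    rw [mem_neighborFinset] at hz
    have hdz := hG.dist_eq_add_one_of_adj_of_ne u hyx hd hz hzy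
    obtain ⟨k, w, hk, h0, -, hadj, hdist, hleaf, hmid⟩ :=
      hG.exists_tail_away_from u hz hdz fun z' hz' => hlow z' (by omega)
    refine ⟨k + 1, fun | 0 => y | i + 1 => w i, by omega, rfl, h0, ?_, ?_, hleaf, ?_⟩
    · rintro (_ | i) hi
      · simpa [h0] using hyx
      · exact hadj i (by omega)
    · rintro (_ | i) hi
      · simp
      · simp only [hdist i (by omega), hd]
        omega
    · rintro (_ | _ | i) hpos hi
      · omega
      · show G.degree (w 0) = 2
        rw [h0]
        exact hx_two
      · exact hmid (i + 1) (by omega) (by omega)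
termination_by Fintype.card V - G.dist u x
decreasing_by have := G.dist_lt_card u z; omega

lemma IsTree.isTailThrough_of_dist_eq_add_one (hG : G.IsTree) (u : V) {s x : V}
    (hs : 3 ≤ G.degree s) (hsx : G.Adj s x) (hd : G.dist u x = G.dist u s + 1)
    (hlow : ∀ z, G.dist u s < G.dist u z → G.degree z ≤ 2) : IsTailThrough G s x := by
  obtain ⟨k, w, hk, h0, h1, hadj, hdist, hleaf, hmid⟩ := hG.exists_tail_away_from u hsx hd hlow
  refine ⟨k, w, hk, h0, h1, hadj, fun i j hi hj hij => ?_, hs, hleaf, hmid⟩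
  have := hdist i hi
  rw [hij, hdist j hj] at this
  omega

end SimpleGraph

open SimpleGraph

/-- Every finite tree containing a vertex of degree 3 or more has at least one split
vertex. -/
theorem tree_has_split_vertex {V : Type*} [Fintype V] (G : SimpleGraph V)
    [DecidableRel G.Adj] (htree : G.IsTree) (v : V) (hv : 3 ≤ G.degree v) :
    ∃ s : V, IsSplitVertex G s := by
  obtain ⟨s, hs_mem, hs_max⟩ := Finset.exists_max_image
    (Finset.univ.filter fun x => 3 ≤ G.degree x) (G.dist v) ⟨v, by simpa using hv⟩
  have hs : 3 ≤ G.degree s := by simpa using hs_mem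
  have hlow : ∀ z, G.dist v s < G.dist v z → G.degree z ≤ 2 := by
    intro z hz
    by_contra! hz_deg
    exact (hs_max z (by simpa using Nat.succ_le_of_lt hz_deg)).not_gt hz
  obtain ⟨u₁, hu₁, u₂, hu₂, hne⟩ :=
    Finset.one_lt_card.mp (htree.one_lt_card_filter_dist_eq_add_one v hs)
  simp only [Finset.mem_filter, mem_neighborFinset] at hu₁ hu₂
  exact ⟨s, hs, u₁, u₂, hne,
    htree.isTailThrough_of_dist_eq_add_one v hs hu₁.1 hu₁.2 hlow,
    htree.isTailThrough_of_dist_eq_add_one v hs hu₂.1 hu₂.2 hlow⟩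
end

section
/- Let G be a finite forest (an acyclic simple graph). Then every connected component of G is either a path component (all of its vertices have degree at most 2) or a complex component (it contains a split vertex, i.e., a vertex of degree at least 3 having at least two tails). -/
/-!
Pick a vertex `r` of degree at least 3 in the component and a longest path `p` from `r` to a
vertex `s` of degree at least 3. In a forest only one neighbour of `s` lies on `p`, so `s` has at
least two neighbours `u` off `p`. For each of them take a longest path `q` from `s` through `u`:
an inner vertex of `q` of degree at least 3 would give a longer path than `p`, and its end is a
leaf, since a further neighbour would either close a cycle or extend `q`. So `q` is a tail of `s`.
-/

open SimpleGraph Walk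

section

variable {V : Type*} {G : SimpleGraph V}

theorem SimpleGraph.Walk.snd_concat {u v w : V} {p : G.Walk u v} (hp : ¬p.Nil) (h : G.Adj v w) :
    (p.concat h).snd = p.snd := by
  rw [concat_eq_append, snd, getVert_append]
  have := not_nil_iff_lt_length.1 hp
  split_ifs
  · rfl
  · simp [show p.length = 1 by omega, ← p.getVert_length]

/-- In a forest a walk is a path as soon as it does not backtrack. -/
theorem SimpleGraph.IsAcyclic.isPath_append (hG : G.IsAcyclic) {u v w : V} {p : G.Walk u v}
    {q : G.Walk v w} (hp : p.IsPath) (hq : q.IsPath) (h : p.penultimate ≠ q.snd) :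
    (p.append q).IsPath := by
  rw [hG.isPath_iff_isChain, edges_append]
  refine ((hG.isPath_iff_isChain p).1 hp).append ((hG.isPath_iff_isChain q).1 hq) ?_
  rintro e hlast _ hhead rfl
  have hlast_eq := List.getLast_of_mem_getLast? hlast
  have hhead_eq := List.head_of_mem_head? hhead
  rw [getLast_edges_eq_mk_penultimate_end] at hlast_eq
  rw [head_edges_eq_mk_start_snd, ← hlast_eq, Sym2.eq_iff] at hhead_eq
  have hnil : ¬p.Nil := fun hnil ↦ by simp [edges_eq_nil.mpr hnil] at hlast
  rcases hhead_eq with ⟨hloop, -⟩ | ⟨-, hsnd⟩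
  · exact (p.adj_penultimate hnil).ne hloop.symm
  · exact h hsnd.symm

theorem SimpleGraph.exists_isPath_forall_length_le [Fintype V] {r : V}
    (P : ∀ x, G.Walk r x → Prop) {x₀ : V} {q₀ : G.Walk r x₀} (hq₀ : q₀.IsPath) (hP₀ : P x₀ q₀) :
    ∃ x, ∃ q : G.Walk r x, q.IsPath ∧ P x q ∧
      ∀ x' (q' : G.Walk r x'), q'.IsPath → P x' q' → q'.length ≤ q.length := by
  classical
  obtain ⟨x, q, hq, hPq, hlen⟩ := Nat.findGreatest_spec (P := fun n ↦
    ∃ x, ∃ q : G.Walk r x, q.IsPath ∧ P x q ∧ q.length = n) hq₀.length_lt.le ⟨x₀, q₀, hq₀, hP₀, rfl⟩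
  exact ⟨x, q, hq, hPq, fun x' q' hq' hP' ↦
    hlen ▸ Nat.le_findGreatest hq'.length_lt.le ⟨x', q', hq', hP', rfl⟩⟩

variable [Fintype V] [DecidableRel G.Adj]

theorem SimpleGraph.Walk.IsPath.two_le_degree_getVert {u v : V} {q : G.Walk u v} (hq : q.IsPath)
    {i : ℕ} (hi₀ : 0 < i) (hi : i < q.length) : 2 ≤ G.degree (q.getVert i) := by
  classical
  have hprev : G.Adj (q.getVert i) (q.getVert (i - 1)) := by
    simpa [Nat.sub_add_cancel hi₀] using (q.adj_getVert_succ (i := i - 1) (by omega)).symm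
  have hne : q.getVert (i - 1) ≠ q.getVert (i + 1) := fun h ↦ by
    have := hq.getVert_injOn (by simp only [Set.mem_ofPred_eq]; omega)
      (by simp only [Set.mem_ofPred_eq]; omega) h
    omega
  rw [← card_neighborFinset_eq_degree]
  exact Finset.one_lt_card.2 ⟨_, (mem_neighborFinset ..).2 hprev, _,
    (mem_neighborFinset ..).2 (q.adj_getVert_succ hi), hne⟩

theorem isTailThrough_snd_of_isPath {s x : V} {q : G.Walk s x} (hq : q.IsPath) (hnil : ¬q.Nil)
    (hs : 3 ≤ G.degree s) (hx : G.degree x = 1)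
    (hinner : ∀ i, 0 < i → i < q.length → G.degree (q.getVert i) ≤ 2) :
    IsTailThrough G s q.snd :=
  ⟨q.length, q.getVert, not_nil_iff_lt_length.1 hnil, q.getVert_zero, rfl,
    fun _ hi ↦ q.adj_getVert_succ hi, fun _ _ hi hj hij ↦ hq.getVert_injOn hi hj hij, hs,
    by rwa [q.getVert_length],
    fun i hi₀ hi ↦ (hinner i hi₀ hi).antisymm (hq.two_le_degree_getVert hi₀ hi)⟩

theorem SimpleGraph.IsAcyclic.isTailThrough_of_forall_length_le (hG : G.IsAcyclic) {r s u : V}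
    {p : G.Walk r s} (hp : p.IsPath) (hs : 3 ≤ G.degree s)
    (hmax : ∀ x (p' : G.Walk r x), p'.IsPath → 3 ≤ G.degree x → p'.length ≤ p.length)
    (hadj : G.Adj s u) (hu : u ∉ p.support) : IsTailThrough G s u := by
  obtain ⟨x, q, hq, rfl, hqmax⟩ :=
    exists_isPath_forall_length_le (fun _ q ↦ q.snd = u) (IsPath.of_adj hadj) rfl
  have hnil : ¬q.Nil := fun h ↦ by cases h; exact hadj.ne rfl
  refine isTailThrough_snd_of_isPath hq hnil hs ?_ fun i hi₀ hi ↦ ?_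
  · rw [degree_eq_one_iff_existsUnique_adj]
    refine ⟨q.penultimate, (q.adj_penultimate hnil).symm, fun y hy ↦ ?_⟩
    by_contra hne
    have hyq : y ∉ q.support := fun h ↦ hne (hG.eq_penultimate_of_adj_end hq hy h)
    have := hqmax _ (q.concat hy) (hq.concat hyq hy) (snd_concat hnil hy)
    simp at this
  · by_contra! hdeg
    have hpq := hG.isPath_append hp (hq.take i) <| by
      rw [snd, take_getVert, min_eq_right hi₀]
      exact ne_of_mem_of_not_mem (p.getVert_mem_support _) hu
    have := hmax _ _ hpq hdeg
    simp only [length_append, take_length] at this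
    omega

end

/-- In a finite forest, every connected component is either a path component (all of
its vertices have degree at most 2) or a complex component (it contains a split
vertex). -/
theorem component_path_or_complex {V : Type*} [Fintype V] (G : SimpleGraph V)
    [DecidableRel G.Adj] (hforest : G.IsAcyclic) (C : G.ConnectedComponent) :
    (∀ v : V, G.connectedComponentMk v = C → G.degree v ≤ 2) ∨
    (∃ s : V, G.connectedComponentMk s = C ∧ IsSplitVertex G s) := by
  classical
  refine or_iff_not_imp_left.2 fun h ↦ ?_
  push Not at h
  obtain ⟨r, rfl, hr⟩ := h
  obtain ⟨s, p, hp, hs, hmax⟩ :=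
    exists_isPath_forall_length_le (fun x _ ↦ 3 ≤ G.degree x) (IsPath.nil (u := r)) hr
  have hoff : ∀ u ∈ (G.neighborFinset s).erase p.penultimate, G.Adj s u ∧ u ∉ p.support :=
    fun u hu ↦ by
      obtain ⟨hne, hadj⟩ := Finset.mem_erase.1 hu
      rw [mem_neighborFinset] at hadj
      exact ⟨hadj, fun h ↦ hne (hforest.eq_penultimate_of_adj_end hp hadj h)⟩
  have hcard : 1 < ((G.neighborFinset s).erase p.penultimate).card := by
    have := Finset.pred_card_le_card_erase (s := G.neighborFinset s) (a := p.penultimate)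
    rw [card_neighborFinset_eq_degree] at this
    omega
  obtain ⟨u₁, hu₁, u₂, hu₂, hne⟩ := Finset.one_lt_card.1 hcard
  exact ⟨s, (ConnectedComponent.sound p.reachable).symm, hs, u₁, u₂, hne,
    hforest.isTailThrough_of_forall_length_le hp hs hmax (hoff u₁ hu₁).1 (hoff u₁ hu₁).2,
    hforest.isTailThrough_of_forall_length_le hp hs hmax (hoff u₂ hu₂).1 (hoff u₂ hu₂).2⟩
end

section
/- Let G = (V,E) be a finite simple graph and D ⊆ V a position (set of dominated vertices) of the domination game. Let R ⊆ V be any set of vertices each of which is red with respect to D (i.e., N[v] ⊆ D for every v ∈ R), and let G' be the induced subgraph of G on V ∖ R. Then valD_G(D) = valD_{G'}(D ∖ R) and valS_G(D) = valS_{G'}(D ∖ R); that is, red vertices can be removed from the graph, along with their edges, without changing the outcome of the game. -/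
-- The closed neighborhood of a vertex `v`: `v` together with its neighbors.
open Classical in
noncomputable def closedNbhd {V : Type*} [Fintype V] (G : SimpleGraph V) (v : V) : Finset V :=
  insert v (G.neighborFinset v)

theorem gameVal_aux {V : Type*} [Fintype V] [DecidableEq V] (G : SimpleGraph V)
    (D : Finset V) (v : V) (h : ¬ closedNbhd G v ⊆ D) :
    (Finset.univ \ (D ∪ closedNbhd G v)).card < (Finset.univ \ D).card := by
  apply Finset.card_lt_card
  rw [Finset.ssubset_iff_of_subset
    (Finset.sdiff_subset_sdiff (le_refl _) Finset.subset_union_left)]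
  obtain ⟨x, hx1, hx2⟩ := Finset.not_subset.mp h
  refine ⟨x, Finset.mem_sdiff.mpr ⟨Finset.mem_univ _, hx2⟩, fun hc => ?_⟩
  exact (Finset.mem_sdiff.mp hc).2 (Finset.mem_union_right _ hx1)

-- The value of the domination game from the position where `D` is the set of
-- dominated vertices; `dom = true` means Dominator (the minimizer) is to move,
-- `dom = false` means Staller (the maximizer) is to move.
open Classical in
noncomputable def gameVal {V : Type*} [Fintype V] (G : SimpleGraph V)
    (dom : Bool) (D : Finset V) : ℕ :=
  if hD : D = Finset.univ then 0
  else
    have hne : ((Finset.univ.filter fun v => ¬ closedNbhd G v ⊆ D)).attach.Nonempty := by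
      rw [Finset.attach_nonempty_iff]
      obtain ⟨w, hw⟩ : ∃ w : V, w ∉ D := by
        by_contra hcon
        push_neg at hcon
        exact hD (Finset.eq_univ_iff_forall.mpr hcon)
      exact ⟨w, Finset.mem_filter.mpr ⟨Finset.mem_univ _,
        fun hsub => hw (hsub (Finset.mem_insert_self _ _))⟩⟩
    if dom then
      1 + ((Finset.univ.filter fun v => ¬ closedNbhd G v ⊆ D)).attach.inf' hne
          (fun v => gameVal G false (D ∪ closedNbhd G v.1))
    else
      1 + ((Finset.univ.filter fun v => ¬ closedNbhd G v ⊆ D)).attach.sup' hne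
          (fun v => gameVal G true (D ∪ closedNbhd G v.1))
termination_by (Finset.univ \ D).card
decreasing_by
  all_goals exact gameVal_aux G D v.1 (Finset.mem_filter.mp v.2).2


section RedAux

open Classical Finset

variable {V : Type*} [Fintype V] (G : SimpleGraph V) (R : Finset V)

open Classical in
private lemma gameVal_univ (b : Bool) : gameVal G b (Finset.univ : Finset V) = 0 := by
  rw [gameVal]; simp

open Classical in
private lemma closedNbhd_induce (v : {v : V | v ∉ R}) :
    closedNbhd (G.induce {v : V | v ∉ R}) v
      = (closedNbhd G v.1).subtype (fun x => x ∈ ({v : V | v ∉ R} : Set V)) := by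
  ext x
  simp only [closedNbhd, Finset.mem_insert, SimpleGraph.mem_neighborFinset,
    Finset.mem_subtype, SimpleGraph.comap_adj, Function.Embedding.coe_subtype,
    Subtype.ext_iff]

open Classical in
private lemma mem_Dsub (D : Finset V) (x : {v : V | v ∉ R}) :
    x ∈ ((D \ R).subtype fun v => v ∈ ({v : V | v ∉ R} : Set V)) ↔ (x : V) ∈ D := by
  have hx : (x : V) ∉ R := x.2
  simp [Finset.mem_subtype, Finset.mem_sdiff, hx]

open Classical in
private lemma legal_iff (D : Finset V) (hR : ∀ v ∈ R, closedNbhd G v ⊆ D)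
    (v : {v : V | v ∉ R}) :
    closedNbhd (G.induce {v : V | v ∉ R}) v
        ⊆ ((D \ R).subtype fun v => v ∈ ({v : V | v ∉ R} : Set V))
      ↔ closedNbhd G v.1 ⊆ D := by
  rw [closedNbhd_induce]
  constructor
  · intro h x hx
    by_cases hxR : x ∈ R
    · exact hR x hxR (Finset.mem_insert_self _ _)
    · have : (⟨x, hxR⟩ : {v : V | v ∉ R}) ∈ (closedNbhd G v.1).subtype _ := by
        simpa [Finset.mem_subtype] using hx
      have := h this
      rw [mem_Dsub] at this
      exact this
  · intro h x hx
    rw [Finset.mem_subtype] at hx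
    rw [mem_Dsub]
    exact h hx

open Classical in
private lemma move_eq (D : Finset V) (v : {v : V | v ∉ R}) :
    (((D ∪ closedNbhd G v.1) \ R).subtype fun v => v ∈ ({v : V | v ∉ R} : Set V))
      = (@Union.union _ (@Finset.instUnion _ fun a b => Classical.propDecidable (a = b)) ((D \ R).subtype fun v => v ∈ ({v : V | v ∉ R} : Set V)) (closedNbhd (G.induce {v : V | v ∉ R}) v)) := by
  rw [closedNbhd_induce]
  ext x
  have hx : (x : V) ∉ R := x.2
  simp [Finset.mem_subtype, Finset.mem_sdiff, hx]

open Classical in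
private lemma red_aux :
    ∀ n : ℕ, ∀ D : Finset V, (Finset.univ \ D).card ≤ n →
      (∀ v ∈ R, closedNbhd G v ⊆ D) → ∀ b : Bool,
      gameVal G b D =
        gameVal (G.induce {v : V | v ∉ R}) b
          ((D \ R).subtype fun v => v ∈ ({v : V | v ∉ R} : Set V)) := by
  intro n
  induction n with
  | zero =>
    intro D hcard hR b
    have hD : D = Finset.univ := by
      rw [Finset.eq_univ_iff_forall]
      intro x
      by_contra hx
      have : x ∈ Finset.univ \ D := Finset.mem_sdiff.mpr ⟨Finset.mem_univ _, hx⟩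
      have := Finset.card_pos.mpr ⟨x, this⟩
      omega
    subst hD
    have hD' : ((Finset.univ \ R).subtype fun v => v ∈ ({v : V | v ∉ R} : Set V))
        = Finset.univ := by
      rw [Finset.eq_univ_iff_forall]
      intro x
      rw [mem_Dsub]
      exact Finset.mem_univ _
    rw [hD', gameVal_univ, gameVal_univ]
  | succ n ih =>
    intro D hcard hR b
    by_cases hD : D = Finset.univ
    · subst hD
      have hD' : ((Finset.univ \ R).subtype fun v => v ∈ ({v : V | v ∉ R} : Set V))
          = Finset.univ := by
        rw [Finset.eq_univ_iff_forall]
        intro x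
        rw [mem_Dsub]
        exact Finset.mem_univ _
      rw [hD', gameVal_univ, gameVal_univ]
    · have hD' : ((D \ R).subtype fun v => v ∈ ({v : V | v ∉ R} : Set V))
          ≠ Finset.univ := by
        intro h
        apply hD
        rw [Finset.eq_univ_iff_forall]
        intro x
        by_cases hxR : x ∈ R
        · exact hR x hxR (Finset.mem_insert_self _ _)
        · have : (⟨x, hxR⟩ : {v : V | v ∉ R}) ∈ Finset.univ := Finset.mem_univ _
          rw [← h, mem_Dsub] at this
          exact this
      -- key : corresponding legal moves have equal values
      have key : ∀ (v : V) (hv : v ∉ R), ¬ closedNbhd G v ⊆ D → ∀ b' : Bool,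
          gameVal G b' (D ∪ closedNbhd G v)
            = gameVal (G.induce {v : V | v ∉ R}) b'
              (@Union.union _ (@Finset.instUnion _ fun a b => Classical.propDecidable (a = b)) ((D \ R).subtype fun v => v ∈ ({v : V | v ∉ R} : Set V)) (closedNbhd (G.induce {v : V | v ∉ R}) ⟨v, hv⟩)) := by
        intro v hv hleg b'
        rw [← move_eq]
        apply ih
        · have := gameVal_aux G D v hleg
          omega
        · intro w hw
          exact (hR w hw).trans Finset.subset_union_left
      rw [gameVal, gameVal]
      rw [dif_neg hD, dif_neg hD']
      cases b
      · simp only [Bool.false_eq_true, if_false]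
        congr 1
        apply le_antisymm
        · apply Finset.sup'_le
          intro v _
          have hleg : ¬ closedNbhd G v.1 ⊆ D := (Finset.mem_filter.mp v.2).2
          have hv : v.1 ∉ R := fun h => hleg (hR v.1 h)
          rw [key v.1 hv hleg true, Finset.le_sup'_iff]
          exact ⟨⟨⟨v.1, hv⟩, by
            simp only [Finset.mem_filter]
            exact ⟨Finset.mem_univ _,
              fun h => hleg ((legal_iff G R D hR ⟨v.1, hv⟩).mp h)⟩⟩,
            Finset.mem_attach _ _, le_rfl⟩
        · apply Finset.sup'_le
          intro u _
          have hu := u.2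
          simp only [Finset.mem_filter] at hu
          have hlegB := hu.2
          have hx : (u.1 : V) ∉ R := u.1.2
          have hlegA : ¬ closedNbhd G u.1.1 ⊆ D :=
            fun h => hlegB ((legal_iff G R D hR u.1).mpr h)
          rw [Finset.le_sup'_iff]
          exact ⟨⟨u.1.1, by
            simp only [Finset.mem_filter]
            exact ⟨Finset.mem_univ _, hlegA⟩⟩,
            Finset.mem_attach _ _, le_of_eq (key u.1.1 hx hlegA true).symm⟩
      · simp only [if_true]
        congr 1
        apply le_antisymm
        · apply Finset.le_inf'
          intro u _
          have hu := u.2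
          simp only [Finset.mem_filter] at hu
          have hlegB := hu.2
          have hx : (u.1 : V) ∉ R := u.1.2
          have hlegA : ¬ closedNbhd G u.1.1 ⊆ D :=
            fun h => hlegB ((legal_iff G R D hR u.1).mpr h)
          rw [Finset.inf'_le_iff]
          exact ⟨⟨u.1.1, by
            simp only [Finset.mem_filter]
            exact ⟨Finset.mem_univ _, hlegA⟩⟩,
            Finset.mem_attach _ _, le_of_eq (key u.1.1 hx hlegA false)⟩
        · apply Finset.le_inf'
          intro v _
          have hleg : ¬ closedNbhd G v.1 ⊆ D := (Finset.mem_filter.mp v.2).2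
          have hv : v.1 ∉ R := fun h => hleg (hR v.1 h)
          rw [key v.1 hv hleg false, Finset.inf'_le_iff]
          exact ⟨⟨⟨v.1, hv⟩, by
            simp only [Finset.mem_filter]
            exact ⟨Finset.mem_univ _,
              fun h => hleg ((legal_iff G R D hR ⟨v.1, hv⟩).mp h)⟩⟩,
            Finset.mem_attach _ _, le_rfl⟩

end RedAux

-- **Red vertices can be removed.**  Let `D` be a position of the domination game
-- on `G` and let `R` be a set of vertices each of which is red with respect to `D`
-- (its whole closed neighborhood is dominated).  Then the game values (both with
-- Dominator to move and with Staller to move) on `G` from position `D` equal the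
-- game values on the induced subgraph of `G` on `V \ R` from position `D \ R`.
open Classical in
theorem red_vertices_removable {V : Type*} [Fintype V] (G : SimpleGraph V)
    (D R : Finset V) (hR : ∀ v ∈ R, closedNbhd G v ⊆ D) :
    gameVal G true D =
      gameVal (G.induce {v : V | v ∉ R}) true
        ((D \ R).subtype fun v => v ∈ ({v : V | v ∉ R} : Set V)) ∧
    gameVal G false D =
      gameVal (G.induce {v : V | v ∉ R}) false
        ((D \ R).subtype fun v => v ∈ ({v : V | v ∉ R} : Set V)) := by
  exact ⟨red_aux G R _ D le_rfl hR true, red_aux G R _ D le_rfl hR false⟩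
end

section
/- Let G = (V,E) be a finite simple graph, D ⊆ V a position (set of dominated vertices) of the domination game, and let u, w be adjacent vertices that are both blue with respect to D (i.e., u, w ∈ D, N[u] ⊄ D, and N[w] ⊄ D). Let G' be the graph obtained from G by deleting the edge {u, w}. Then valD_G(D) = valD_{G'}(D) and valS_G(D) = valS_{G'}(D); that is, edges between two blue vertices can be removed from the graph without changing the outcome of the game. -/
section helpers
variable {V : Type*} [Fintype V] (G : SimpleGraph V) (u w : V)

open Classical

lemma cn_sub (v : V) : closedNbhd (G.deleteEdges {s(u, w)}) v ⊆ closedNbhd G v := by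
  intro x hx
  simp only [closedNbhd, Finset.mem_insert, SimpleGraph.mem_neighborFinset,
    SimpleGraph.deleteEdges_adj] at hx ⊢
  tauto

lemma cn_diff (v x : V) (hx : x ∈ closedNbhd G v)
    (hx' : x ∉ closedNbhd (G.deleteEdges {s(u, w)}) v) : x = u ∨ x = w := by
  simp only [closedNbhd, Finset.mem_insert, SimpleGraph.mem_neighborFinset,
    SimpleGraph.deleteEdges_adj, Set.mem_singleton_iff, not_or, not_and, not_not] at hx hx'
  rcases hx with rfl | hadj
  · exact absurd rfl hx'.1
  · have := hx'.2 hadj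
    rw [Sym2.eq_iff] at this
    tauto

variable {D : Finset V}

lemma cn_union (hu : u ∈ D) (hw : w ∈ D) (v : V) :
    D ∪ closedNbhd G v = D ∪ closedNbhd (G.deleteEdges {s(u, w)}) v := by
  apply Finset.Subset.antisymm
  · intro x hx
    rcases Finset.mem_union.mp hx with h | h
    · exact Finset.mem_union_left _ h
    · by_cases h' : x ∈ closedNbhd (G.deleteEdges {s(u, w)}) v
      · exact Finset.mem_union_right _ h'
      · rcases cn_diff G u w v x h h' with rfl | rfl
        · exact Finset.mem_union_left _ hu
        · exact Finset.mem_union_left _ hw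
  · exact Finset.union_subset_union (le_refl _) (cn_sub G u w v)

lemma cn_sub_iff (hu : u ∈ D) (hw : w ∈ D) (v : V) :
    closedNbhd G v ⊆ D ↔ closedNbhd (G.deleteEdges {s(u, w)}) v ⊆ D := by
  constructor
  · exact fun h => (cn_sub G u w v).trans h
  · intro h x hx
    by_cases h' : x ∈ closedNbhd (G.deleteEdges {s(u, w)}) v
    · exact h h'
    · rcases cn_diff G u w v x hx h' with rfl | rfl
      · exact hu
      · exact hw

end helpers


lemma inf'_attach_congr {α : Type*} {s t : Finset α} (h : s = t)
    (hs : s.attach.Nonempty) (ht : t.attach.Nonempty)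
    {f g : α → ℕ} (hfg : ∀ a ∈ s, f a = g a) :
    s.attach.inf' hs (fun x => f x.1) = t.attach.inf' ht (fun x => g x.1) := by
  subst h
  exact Finset.inf'_congr hs rfl (fun x _ => hfg x.1 x.2)

lemma sup'_attach_congr {α : Type*} {s t : Finset α} (h : s = t)
    (hs : s.attach.Nonempty) (ht : t.attach.Nonempty)
    {f g : α → ℕ} (hfg : ∀ a ∈ s, f a = g a) :
    s.attach.sup' hs (fun x => f x.1) = t.attach.sup' ht (fun x => g x.1) := by
  subst h
  exact Finset.sup'_congr hs rfl (fun x _ => hfg x.1 x.2)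

open Classical in
lemma key {V : Type*} [Fintype V] (G : SimpleGraph V) (u w : V) :
    ∀ n (D : Finset V), (Finset.univ \ D).card ≤ n → u ∈ D → w ∈ D → ∀ b,
      gameVal G b D = gameVal (G.deleteEdges {s(u, w)}) b D := by
  intro n
  induction n with
  | zero =>
    intro D hcard hu hw b
    have hD : D = Finset.univ := by
      by_contra h
      obtain ⟨x, hx⟩ : ∃ x : V, x ∉ D := by
        by_contra hc; push_neg at hc; exact h (Finset.eq_univ_iff_forall.mpr hc)
      have : x ∈ Finset.univ \ D := Finset.mem_sdiff.mpr ⟨Finset.mem_univ _, hx⟩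
      have := Finset.card_pos.mpr ⟨x, this⟩
      omega
    rw [gameVal, gameVal, dif_pos hD, dif_pos hD]
  | succ n ih =>
    intro D hcard hu hw b
    by_cases hD : D = Finset.univ
    · rw [gameVal, gameVal, dif_pos hD, dif_pos hD]
    have hset : (Finset.univ.filter fun v => ¬ closedNbhd G v ⊆ D)
        = (Finset.univ.filter fun v => ¬ closedNbhd (G.deleteEdges {s(u, w)}) v ⊆ D) := by
      ext v
      simp only [Finset.mem_filter, Finset.mem_univ, true_and]
      rw [cn_sub_iff G u w hu hw v]
    have hrec : ∀ v ∈ (Finset.univ.filter fun v => ¬ closedNbhd G v ⊆ D), ∀ b',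
        gameVal G b' (D ∪ closedNbhd G v)
          = gameVal (G.deleteEdges {s(u, w)}) b' (D ∪ closedNbhd (G.deleteEdges {s(u, w)}) v) := by
      intro v hv b'
      rw [← cn_union G u w hu hw v]
      apply ih
      · have := gameVal_aux G D v (Finset.mem_filter.mp hv).2
        omega
      · exact Finset.mem_union_left _ hu
      · exact Finset.mem_union_left _ hw
    rw [gameVal, gameVal, dif_neg hD, dif_neg hD]
    cases b with
    | true =>
      simp only [if_true]
      exact congrArg (1 + ·) (inf'_attach_congr hset _ _ (fun a ha => hrec a ha false))
    | false =>
      simp only [Bool.false_eq_true, if_false]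
      exact congrArg (1 + ·) (sup'_attach_congr hset _ _ (fun a ha => hrec a ha true))

/-- **Edges between two blue vertices can be removed.**  Let `D` be a position of
the domination game on `G` and let `u`, `w` be adjacent vertices both blue with
respect to `D` (dominated, but with an undominated neighbor).  Then deleting the
edge `{u, w}` changes neither game value from position `D`. -/
theorem blue_blue_edge_removable {V : Type*} [Fintype V] (G : SimpleGraph V)
    (D : Finset V) (u w : V) (hadj : G.Adj u w)
    (hu : u ∈ D) (hu' : ¬ closedNbhd G u ⊆ D)
    (hw : w ∈ D) (hw' : ¬ closedNbhd G w ⊆ D) :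
    gameVal G true D = gameVal (G.deleteEdges {s(u, w)}) true D ∧
    gameVal G false D = gameVal (G.deleteEdges {s(u, w)}) false D := by
  exact ⟨key G u w _ D le_rfl hu hw true, key G u w _ D le_rfl hu hw false⟩
end
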